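/- Theorem 1: a supervisor realization R is robust with respect to G, X_crit and A if and only if for every s ∈ P_{Σ_mΣ_{o,e}}(L(G_a||R_a||A)), the run word W(s; γ₀, γ₁, …, γ_{|s|}) belongs to L(𝒜^sup), where γ₀ = C_R(ε) and γ_i = C_R(P^S(s^i)) with s^i the length-i prefix of s. -/

import Mathlib

attribute [local instance] Classical.propDecidable

noncomputable section

namespace RobustDES

/-- Events of the attacked system `Σ_m = Σ ∪ Σ_a^i ∪ Σ_a^d`:
`plain a` is a legitimate event `a ∈ Σ`, `ins a` is the inserted copy `a_i`
and `del a` is the deleted copy `a_d`. -/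
inductive Ev (S : Type) : Type
  | plain : S → Ev S
  | ins : S → Ev S
  | del : S → Ev S

/-- Extension of a partial transition function to strings. -/
def run {X E : Type} (δ : X → E → Option X) : X → List E → Option X
  | x, [] => some x
  | x, e :: s => (δ x e).bind fun y => run δ y s

/-- The language generated by a partial automaton `(X, δ, x0)`. -/
def Lang {X E : Type} (δ : X → E → Option X) (x0 : X) : Set (List E) :=
  { s | (run δ x0 s).isSome }

variable {S XG XR XA : Type}

/-- The projection `P^G : Σ_m* → Σ*` (`a, a_d ↦ a`, `a_i ↦ ε`). -/
def PGproj : List (Ev S) → List S := fun s =>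
  s.flatMap fun e =>
    match e with
    | .plain a => [a]
    | .del a => [a]
    | .ins _ => []

/-- The projection `P^S : Σ_m* → Σ*` (`a, a_i ↦ a`, `a_d ↦ ε`). -/
def PSproj : List (Ev S) → List S := fun s =>
  s.flatMap fun e =>
    match e with
    | .plain a => [a]
    | .ins a => [a]
    | .del _ => []

/-- Natural projection `P_{ΣΣo}` erasing events not in `So`. -/
def projOn (So : Set S) (s : List S) : List S :=
  s.filter fun e => decide (e ∈ So)

/-- Membership of a tagged event in `Σ_{o,e} = Σ_o ∪ Σ_a^i ∪ Σ_a^d`. -/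
def inOe (So Sa : Set S) : Ev S → Prop
  | .plain a => a ∈ So
  | .ins a => a ∈ Sa
  | .del a => a ∈ Sa

/-- Natural projection `P_{Σ_mΣ_{o,e}}` erasing the unobservable events `Σ_uo`. -/
def projOe (So : Set S) : List (Ev S) → List (Ev S) := fun s =>
  s.flatMap fun e =>
    match e with
    | .plain a => if a ∈ So then [Ev.plain a] else []
    | e => [e]

/-- Transition function of the attacked plant `G_a` (over `Σ_m`):
`δ_{G_a}(x,e) = δ_G(x, P^G(e))`. -/
def δGa (Sa : Set S) (δG : XG → S → Option XG) : XG → Ev S → Option XG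
  | x, .plain a => δG x a
  | x, .del a => if a ∈ Sa then δG x a else none
  | x, .ins a => if a ∈ Sa then some x else none

/-- Active (legitimate) event set of a supervisor state. -/
def ΓR (δR : XR → S → Option XR) (y : XR) : Set S := {e | (δR y e).isSome}

/-- Transition function of the attacked supervisor `R_a` (over `Σ_m`). -/
def δRa (Sa : Set S) (δR : XR → S → Option XR) : XR → Ev S → Option XR
  | y, .plain a => δR y a
  | y, .ins a =>
      if a ∈ Sa then (if (δR y a).isSome then δR y a else some y) else none
  | y, .del a =>
      if a ∈ Sa then (if (δR y a).isSome then some y else none) else none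

/-- `R` is a supervisor realization: every uncontrollable event is enabled
everywhere and enabled unobservable events self-loop. -/
def IsSupRealization (So Suc : Set S) (δR : XR → S → Option XR) : Prop :=
  (∀ x e, e ∈ Suc → (δR x e).isSome) ∧
  (∀ x e, e ∉ So → (δR x e).isSome → δR x e = some x)

/-- `A` is an attack automaton over `Σ_{o,e}`: it is complete on `Σ_o \ Σ_a`,
for every `e ∈ Σ_a` either `e` or `e_d` is defined, and it is undefined outside
`Σ_{o,e}`. -/
def IsAttack (So Sa : Set S) (δA : XA → Ev S → Option XA) : Prop :=
  (∀ q a, a ∈ So → a ∉ Sa → (δA q (.plain a)).isSome) ∧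
  (∀ q a, a ∈ Sa → ((δA q (.plain a)).isSome ∨ (δA q (.del a)).isSome)) ∧
  (∀ q e, ¬ inOe So Sa e → δA q e = none)

/-- Transition function of the composition `G_a || R_a || A` over `Σ_m`:
all three components move on events of `Σ_{o,e}`, only `G_a` and `R_a` move on
unobservable events. -/
def δGRA (So Sa : Set S) (δG : XG → S → Option XG) (δR : XR → S → Option XR)
    (δA : XA → Ev S → Option XA) :
    XG × XR × XA → Ev S → Option (XG × XR × XA) := fun p e =>
  match e with
  | .plain a =>
    if a ∈ So then
      match δGa Sa δG p.1 (.plain a), δRa Sa δR p.2.1 (.plain a), δA p.2.2 (.plain a) with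
      | some x, some y, some z => some (x, y, z)
      | _, _, _ => none
    else
      match δGa Sa δG p.1 (.plain a), δRa Sa δR p.2.1 (.plain a) with
      | some x, some y => some (x, y, p.2.2)
      | _, _ => none
  | e =>
      match δGa Sa δG p.1 e, δRa Sa δR p.2.1 e, δA p.2.2 e with
      | some x, some y, some z => some (x, y, z)
      | _, _, _ => none

/-- Transition function of the composition `G_a || R_a` over `Σ_m`. -/
def δGaRa (Sa : Set S) (δG : XG → S → Option XG) (δR : XR → S → Option XR) :
    XG × XR → Ev S → Option (XG × XR) := fun p e =>
  match δGa Sa δG p.1 e, δRa Sa δR p.2 e with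
  | some x, some y => some (x, y)
  | _, _ => none

/-- `R` is robust w.r.t. `G`, `X_crit` and `A`:
`δ_G(x_{0,G}, s) ∉ X_crit` for every `s ∈ L(S_A/G) = P^G(L(G_a||R_a||A))`. -/
def Robust (So Sa : Set S) (Xcrit : Set XG)
    (δG : XG → S → Option XG) (x0G : XG)
    (δR : XR → S → Option XR) (x0R : XR)
    (δA : XA → Ev S → Option XA) (x0A : XA) : Prop :=
  ∀ t ∈ Lang (δGRA So Sa δG δR δA) (x0G, x0R, x0A),
    ∀ x, run δG x0G (PGproj t) = some x → x ∉ Xcrit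

/-- Total extension `Δ_R` of `δ_R` over observable strings. -/
def ΔRrun (δR : XR → S → Option XR) : XR → List S → XR
  | y, [] => y
  | y, e :: s => ΔRrun δR ((δR y e).getD y) s

/-- Control decision `C_R(s) = Γ_R(Δ_R(x_{0,R}, s))`. -/
def CR (δR : XR → S → Option XR) (x0R : XR) (s : List S) : Set S :=
  {e | (δR (ΔRrun δR x0R s) e).isSome}

/-- The state estimate under attack
`RE(s) = {x : x = δ_{G_a}(x_{0,G}, t), t ∈ P⁻¹_{Σ_mΣ_{o,e}}(s) ∩ L(G_a||R_a||A)}`. -/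
def RE (So Sa : Set S) (δG : XG → S → Option XG) (x0G : XG)
    (δR : XR → S → Option XR) (x0R : XR)
    (δA : XA → Ev S → Option XA) (x0A : XA) (s : List (Ev S)) : Set XG :=
  {x | ∃ t, projOe So t = s ∧ t ∈ Lang (δGRA So Sa δG δR δA) (x0G, x0R, x0A) ∧
        run (δGa Sa δG) x0G t = some x}

/-! ### The arena -/

/-- Unobservable reach `UR_γ(Q)`. -/
def URch (So : Set S) (δG : XG → S → Option XG) (γ : Set S) (Q : Set XG) : Set XG :=
  {x | ∃ t : List S, (∀ a ∈ t, a ∉ So ∧ a ∈ γ) ∧ ∃ q ∈ Q, run δG q t = some x}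

/-- Observable reach `NX_e(Q)`. -/
def NXr (δG : XG → S → Option XG) (a : S) (Q : Set XG) : Set XG :=
  {x | ∃ q ∈ Q, δG q a = some x}

/-- Active event set `Γ_G(Q)` of a set of plant states. -/
def ΓGset (δG : XG → S → Option XG) (Q : Set XG) : Set S :=
  {a | ∃ x ∈ Q, (δG x a).isSome}

/-- Player-1 states of the arena. -/
abbrev AQ1 (XG XA : Type) := Set XG × XA

/-- Player-2 states of the arena. -/
abbrev AQ2 (S XG XA : Type) := Set XG × XA × Set S × Option S

/-- Player-1 transition `h₁((S₁,S₂),γ) = (UR_γ(S₁), S₂, γ, ε)`. -/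
def h1 (So : Set S) (δG : XG → S → Option XG) (p : AQ1 XG XA) (γ : Set S) :
    AQ2 S XG XA :=
  (URch So δG γ p.1, p.2, γ, none)

/-- Player-2 transition `h₂`. -/
def h2 (So Sa : Set S) (δG : XG → S → Option XG) (δA : XA → Ev S → Option XA)
    (q : AQ2 S XG XA) : Ev S → Option (AQ1 XG XA ⊕ AQ2 S XG XA)
  | .plain a =>
    if a ∈ So then
      if q.2.2.2 = some a then some (Sum.inl (q.1, q.2.1))
      else if q.2.2.2 = none ∧ a ∈ ΓGset δG q.1 ∧ a ∈ q.2.2.1 then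
        (δA q.2.1 (.plain a)).map fun z => Sum.inl (NXr δG a q.1, z)
      else none
    else none
  | .ins a =>
    if a ∈ Sa ∧ q.2.2.2 = none then
      (δA q.2.1 (.ins a)).map fun z => Sum.inr (q.1, z, q.2.2.1, some a)
    else none
  | .del a =>
    if a ∈ Sa ∧ q.2.2.2 = none ∧ a ∈ ΓGset δG q.1 ∧ a ∈ q.2.2.1 then
      (δA q.2.1 (.del a)).map fun z =>
        Sum.inr (URch So δG q.2.2.1 (NXr δG a q.1), z, q.2.2.1, none)
    else none

/-- One-step map `H₂ : Q₂ × Σ_{o,e} × Γ ⇀ Q₂` of Definition 6. -/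
def H2 (So Sa : Set S) (δG : XG → S → Option XG) (δA : XA → Ev S → Option XA)
    (q : AQ2 S XG XA) : Ev S → Set S → Option (AQ2 S XG XA)
  | .plain a, γ =>
      (h2 So Sa δG δA q (.plain a)).bind fun r =>
        match r with
        | .inl p => some (h1 So δG p γ)
        | .inr _ => none
  | .del a, _ =>
      (h2 So Sa δG δA q (.del a)).bind fun r =>
        match r with
        | .inr q' => some q'
        | .inl _ => none
  | .ins a, γ =>
      (h2 So Sa δG δA q (.ins a)).bind fun r =>
        match r with
        | .inr q' =>
            (h2 So Sa δG δA q' (.plain a)).bind fun r2 =>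
              match r2 with
              | .inl p => some (h1 So δG p γ)
              | .inr _ => none
        | .inl _ => none

/-- Extension of `H₂` to strings with a sequence of control decisions. -/
def H2run (So Sa : Set S) (δG : XG → S → Option XG) (δA : XA → Ev S → Option XA) :
    AQ2 S XG XA → List (Ev S) → List (Set S) → Option (AQ2 S XG XA)
  | q, [], [] => some q
  | q, e :: s, γ :: γs =>
      (H2 So Sa δG δA q e γ).bind fun q' => H2run So Sa δG δA q' s γs
  | _, _ :: _, [] => none
  | _, [], _ :: _ => none

/-- The sequence of control decisions `γ_i = C_R(P^S(s^i))`, `i = 1, …, |s|`. -/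
def ctrlSeq (δR : XR → S → Option XR) (x0R : XR) (s : List (Ev S)) : List (Set S) :=
  (List.range s.length).map fun i => CR δR x0R (PSproj (s.take (i + 1)))

/-- Initial arena state `q₀ = ({x_{0,G}}, x_{0,A})`. -/
def arenaInit (x0G : XG) (x0A : XA) : AQ1 XG XA := ({x0G}, x0A)

/-- The arena `𝒜` regarded as a partial automaton over `E = Γ ∪ Σ_{o,e}`. -/
def δAr (So Suc Sa : Set S) (δG : XG → S → Option XG) (δA : XA → Ev S → Option XA) :
    (AQ1 XG XA ⊕ AQ2 S XG XA) → (Set S ⊕ Ev S) → Option (AQ1 XG XA ⊕ AQ2 S XG XA)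
  | .inl p, .inl γ => if Suc ⊆ γ then some (.inr (h1 So δG p γ)) else none
  | .inr q, .inr e => h2 So Sa δG δA q e
  | _, _ => none

/-- The projection `I₁` onto the plant state-estimate component. -/
def I1 : (AQ1 XG XA ⊕ AQ2 S XG XA) → Set XG := Sum.elim Prod.fst Prod.fst

/-- The projection `I₂` onto the attacker-state component. -/
def I2 : (AQ1 XG XA ⊕ AQ2 S XG XA) → XA := Sum.elim (fun p => p.2) (fun q => q.2.1)

/-- The language `L(𝒜)` of the arena. -/
def LA (So Suc Sa : Set S) (δG : XG → S → Option XG) (δA : XA → Ev S → Option XA)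
    (x0G : XG) (x0A : XA) : Set (List (Set S ⊕ Ev S)) :=
  Lang (δAr So Suc Sa δG δA) (Sum.inl (arenaInit x0G x0A))

/-- The language `L(𝒜^{trim})`: strings of `L(𝒜)` whose runs visit no state `q`
with `I₁(q) ∩ X_crit ≠ ∅`. -/
def LAtrim (So Suc Sa : Set S) (δG : XG → S → Option XG)
    (δA : XA → Ev S → Option XA) (x0G : XG) (x0A : XA) (Xcrit : Set XG) :
    Set (List (Set S ⊕ Ev S)) :=
  {s | s ∈ LA So Suc Sa δG δA x0G x0A ∧
    ∀ u, u <+: s → ∀ st, run (δAr So Suc Sa δG δA) (Sum.inl (arenaInit x0G x0A)) u =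
      some st → I1 st ∩ Xcrit = ∅}

/-- The controllable meta-events `E_c = Γ \ {Σ_uc}`. -/
def Ec (Suc : Set S) : Set (Set S ⊕ Ev S) :=
  {a | ∃ γ : Set S, a = Sum.inl γ ∧ Suc ⊆ γ ∧ γ ≠ Suc}

/-- `K` is controllable w.r.t. `L` and the uncontrollable events `Euc`. -/
def ControllableLang {E : Type} (L : Set (List E)) (Euc : Set E)
    (K : Set (List E)) : Prop :=
  ∀ s ∈ K, ∀ a ∈ Euc, s ++ [a] ∈ L → s ++ [a] ∈ K

/-- `K` is normal w.r.t. the projection `P` and `L`: `K = P⁻¹(P(K)) ∩ L`. -/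
def NormalLang {E : Type} (P : List E → List E) (L K : Set (List E)) : Prop :=
  K = {s | s ∈ L ∧ ∃ t ∈ K, P t = P s}

/-- Natural projection of meta-strings onto the observable meta-events
`E_o = E \ Σ_a^e`. -/
def projEo : List (Set S ⊕ Ev S) → List (Set S ⊕ Ev S) := fun s =>
  s.flatMap fun a =>
    match a with
    | Sum.inr (.ins _) => []
    | Sum.inr (.del _) => []
    | a => [a]

/-- `L(𝒜^{sup})`: the union of all sublanguages of `L(𝒜^{trim})` that are
controllable w.r.t. `L(𝒜)` and `E \ E_c` and normal w.r.t. `E_o` and `L(𝒜)`. -/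
def Lsup (So Suc Sa : Set S) (δG : XG → S → Option XG)
    (δA : XA → Ev S → Option XA) (x0G : XG) (x0A : XA) (Xcrit : Set XG) :
    Set (List (Set S ⊕ Ev S)) :=
  ⋃₀ {K | K ⊆ LAtrim So Suc Sa δG δA x0G x0A Xcrit ∧
      ControllableLang (LA So Suc Sa δG δA x0G x0A) (Ec Suc)ᶜ K ∧
      NormalLang projEo (LA So Suc Sa δG δA x0G x0A) K}

/-- The run word `W(s; γ₀, …, γ_{|s|})` in the arena. -/
def Wword (γ0 : Set S) (s : List (Ev S)) (γs : List (Set S)) :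
    List (Set S ⊕ Ev S) :=
  Sum.inl γ0 :: (s.zip γs).flatMap fun p =>
    match p.1 with
    | .plain a => [Sum.inr (Ev.plain a), Sum.inl p.2]
    | .del a => [Sum.inr (Ev.del a)]
    | .ins a => [Sum.inr (Ev.ins a), Sum.inr (Ev.plain a), Sum.inl p.2]

/-- The projection `η : E* → Σ_o*` erasing all meta-events not in `Σ_o`. -/
def ηproj (So : Set S) : List (Set S ⊕ Ev S) → List S := fun s =>
  s.flatMap fun a =>
    match a with
    | Sum.inr (.plain e) => if e ∈ So then [e] else []
    | _ => []


/-- The all-out attack strategy: a single state with every event of `Σ_{o,e}`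
defined (as a self-loop). -/
def allOutδ (So Sa : Set S) : Unit → Ev S → Option Unit := fun _ e =>
  if inOe So Sa e then some () else none

/-- The supervisor extracted from a generator of `L(𝒜^{sup})` by a choice
function `c` of control decisions (Algorithm 1): on an observable enabled event
follow the arena (choose `c y`, then the event), on an unobservable enabled
event self-loop, and disable events outside `c y`. -/
def extractR {Y : Type} (So : Set S) (δg : Y → (Set S ⊕ Ev S) → Option Y)
    (c : Y → Set S) : Y → S → Option Y := fun y a =>
  if a ∈ c y then
    if a ∈ So then
      some (((δg y (Sum.inl (c y))).bind fun y' =>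
        δg y' (Sum.inr (Ev.plain a))).getD y)
    else some y
  else none

/-- The language `L_R` built inductively from a supervisor `R` inside the arena:
`ε ∈ L_R`; from a player-2 state every event of `Σ_{o,e}` feasible in `𝒜` may be
appended; from a player-1 state the control decisions `Σ_uc` and `C_R(η(s))`
may be appended. -/
inductive LRmem {S XG XA XR : Type} (So Suc Sa : Set S)
    (δG : XG → S → Option XG) (x0G : XG)
    (δA : XA → Ev S → Option XA) (x0A : XA)
    (δR : XR → S → Option XR) (x0R : XR) : List (Set S ⊕ Ev S) → Prop
  | nil : LRmem So Suc Sa δG x0G δA x0A δR x0R []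
  | p2 (s : List (Set S ⊕ Ev S)) (q : AQ2 S XG XA) (e : Ev S) :
      LRmem So Suc Sa δG x0G δA x0A δR x0R s →
      run (δAr So Suc Sa δG δA) (Sum.inl (arenaInit x0G x0A)) s = some (Sum.inr q) →
      inOe So Sa e →
      (run (δAr So Suc Sa δG δA) (Sum.inl (arenaInit x0G x0A))
        (s ++ [Sum.inr e])).isSome →
      LRmem So Suc Sa δG x0G δA x0A δR x0R (s ++ [Sum.inr e])
  | p1uc (s : List (Set S ⊕ Ev S)) (p : AQ1 XG XA) :
      LRmem So Suc Sa δG x0G δA x0A δR x0R s →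
      run (δAr So Suc Sa δG δA) (Sum.inl (arenaInit x0G x0A)) s = some (Sum.inl p) →
      LRmem So Suc Sa δG x0G δA x0A δR x0R (s ++ [Sum.inl Suc])
  | p1R (s : List (Set S ⊕ Ev S)) (p : AQ1 XG XA) :
      LRmem So Suc Sa δG x0G δA x0A δR x0R s →
      run (δAr So Suc Sa δG δA) (Sum.inl (arenaInit x0G x0A)) s = some (Sum.inl p) →
      LRmem So Suc Sa δG x0G δA x0A δR x0R (s ++ [Sum.inl (CR δR x0R (ηproj So s))])

/-!
An attacked closed-loop run determines its run word, and the arena run along that word keeps a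
state estimate containing the true plant state; hence a run word in `L(𝒜^sup) ⊆ L(𝒜^trim)`
never leads the plant into `X_crit`. Conversely, if `R` is robust, the words of the arena whose
control decisions are `Σ_uc` or those of `R` (the language `L_R`) form a controllable and normal
sublanguage of `L(𝒜^trim)` containing every run word: every state estimate reached along `L_R`
consists of plant states reached by attacked closed-loop runs, none of which is critical.
-/

section Automata

variable {X E : Type} {δ : X → E → Option X}

theorem run_append (x : X) (s t : List E) :
    run δ x (s ++ t) = (run δ x s).bind fun y => run δ y t := by
  induction s generalizing x with
  | nil => rfl
  | cons e s ih => cases h : δ x e <;> simp [run, h, ih]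

theorem run_snoc_eq_some {x y : X} {s : List E} {e : E} :
    run δ x (s ++ [e]) = some y ↔ ∃ z, run δ x s = some z ∧ δ z e = some y := by
  simp [run_append, run, Option.bind_eq_some_iff]

theorem mem_Lang_of_prefix {x0 : X} {s t : List E} (h : t ∈ Lang δ x0) (hst : s <+: t) :
    s ∈ Lang δ x0 := by
  obtain ⟨u, rfl⟩ := hst
  simp only [Lang, Set.mem_ofPred_eq, run_append] at h ⊢
  cases hs : run δ x0 s <;> simp_all

end Automata

theorem exists_prefix_of_prefix_flatMap {α : Type} {f : α → List α}
    (hf : ∀ a, f a = [] ∨ f a = [a]) {l w : List α} {c : α} (h : w ++ [c] <+: l.flatMap f) :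
    ∃ l₁, l₁ ++ [c] <+: l ∧ l₁.flatMap f = w := by
  induction l generalizing w with
  | nil => simp at h
  | cons b l ih =>
    rw [List.flatMap_cons] at h
    rcases hf b with hb | hb
    · obtain ⟨l₁, hpre, rfl⟩ := ih (by simpa [hb] using h)
      exact ⟨b :: l₁, by simpa using hpre, by simp [hb]⟩
    · rw [hb, List.singleton_append] at h
      cases w with
      | nil => exact ⟨[], by simpa using (List.cons_prefix_cons.mp h).1, rfl⟩
      | cons b' w =>
        rw [List.cons_append, List.cons_prefix_cons] at h
        obtain ⟨rfl, h⟩ := h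
        obtain ⟨l₁, hpre, rfl⟩ := ih h
        exact ⟨b' :: l₁, by simpa using hpre, by simp [hb]⟩

@[simp] theorem PGproj_append (s t : List (Ev S)) : PGproj (s ++ t) = PGproj s ++ PGproj t :=
  List.flatMap_append

@[simp] theorem PSproj_append (s t : List (Ev S)) : PSproj (s ++ t) = PSproj s ++ PSproj t :=
  List.flatMap_append

@[simp] theorem projOe_append (So : Set S) (s t : List (Ev S)) :
    projOe So (s ++ t) = projOe So s ++ projOe So t :=
  List.flatMap_append

@[simp] theorem projEo_append (s t : List (Set S ⊕ Ev S)) :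
    projEo (s ++ t) = projEo s ++ projEo t :=
  List.flatMap_append

@[simp] theorem ηproj_append (So : Set S) (s t : List (Set S ⊕ Ev S)) :
    ηproj So (s ++ t) = ηproj So s ++ ηproj So t :=
  List.flatMap_append

theorem ηproj_projEo (So : Set S) (u : List (Set S ⊕ Ev S)) :
    ηproj So (projEo u) = ηproj So u := by
  induction u with
  | nil => rfl
  | cons c u ih =>
    rw [← List.singleton_append, projEo_append, ηproj_append, ηproj_append, ih]
    rcases c with γ | (a | a | a) <;> rfl

theorem projOe_singleton_of_inOe {So Sa : Set S} {e : Ev S} (he : inOe So Sa e) :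
    projOe So [e] = [e] := by
  cases e <;> simp_all [projOe, inOe]

theorem ΔRrun_append (δR : XR → S → Option XR) (y : XR) (s t : List S) :
    ΔRrun δR y (s ++ t) = ΔRrun δR (ΔRrun δR y s) t := by
  induction s generalizing y with
  | nil => rfl
  | cons a s ih => exact ih _

section ClosedLoop

variable {So Suc Sa : Set S} {δG : XG → S → Option XG} {δR : XR → S → Option XR}
  {δA : XA → Ev S → Option XA}

theorem δGRA_plain_eq_some_iff_of_mem {a : S} (ha : a ∈ So) (p r : XG × XR × XA) :
    δGRA So Sa δG δR δA p (.plain a) = some r ↔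
      δG p.1 a = some r.1 ∧ δR p.2.1 a = some r.2.1 ∧ δA p.2.2 (.plain a) = some r.2.2 := by
  obtain ⟨r1, r2, r3⟩ := r
  simp only [δGRA, if_pos ha, δGa, δRa]
  cases δG p.1 a <;> cases δR p.2.1 a <;> cases δA p.2.2 (.plain a) <;>
    simp [Prod.ext_iff, eq_comm]

theorem δGRA_plain_eq_some_iff_of_not_mem {a : S} (ha : a ∉ So) (p r : XG × XR × XA) :
    δGRA So Sa δG δR δA p (.plain a) = some r ↔
      δG p.1 a = some r.1 ∧ δR p.2.1 a = some r.2.1 ∧ r.2.2 = p.2.2 := by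
  obtain ⟨r1, r2, r3⟩ := r
  simp only [δGRA, if_neg ha, δGa, δRa]
  cases δG p.1 a <;> cases δR p.2.1 a <;> simp [Prod.ext_iff, eq_comm]

theorem δGRA_ins_eq_some_iff {a : S} (p r : XG × XR × XA) :
    δGRA So Sa δG δR δA p (.ins a) = some r ↔
      a ∈ Sa ∧ r.1 = p.1 ∧ r.2.1 = (δR p.2.1 a).getD p.2.1 ∧
        δA p.2.2 (.ins a) = some r.2.2 := by
  obtain ⟨r1, r2, r3⟩ := r
  by_cases ha : a ∈ Sa
  · simp only [δGRA, δGa, δRa, if_pos ha]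
    cases δR p.2.1 a <;> cases δA p.2.2 (.ins a) <;>
      simp [ha, Prod.ext_iff, eq_comm]
  · simp [δGRA, δGa, ha]

theorem δGRA_del_eq_some_iff {a : S} (p r : XG × XR × XA) :
    δGRA So Sa δG δR δA p (.del a) = some r ↔
      a ∈ Sa ∧ δG p.1 a = some r.1 ∧ (δR p.2.1 a).isSome ∧ r.2.1 = p.2.1 ∧
        δA p.2.2 (.del a) = some r.2.2 := by
  obtain ⟨r1, r2, r3⟩ := r
  by_cases ha : a ∈ Sa
  · simp only [δGRA, δGa, δRa, if_pos ha]
    cases δG p.1 a <;> cases δR p.2.1 a <;> cases δA p.2.2 (.del a) <;>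
      simp [ha, Prod.ext_iff, eq_comm]
  · simp [δGRA, δGa, ha]

theorem exists_not_mem_of_δGRA_of_not_inOe {p r : XG × XR × XA} {e : Ev S}
    (h : δGRA So Sa δG δR δA p e = some r) (he : ¬ inOe So Sa e) :
    ∃ a ∉ So, e = .plain a := by
  cases e with
  | plain a => exact ⟨a, he, rfl⟩
  | ins a => exact absurd ((δGRA_ins_eq_some_iff p r).mp h).1 he
  | del a => exact absurd ((δGRA_del_eq_some_iff p r).mp h).1 he

theorem run_PGproj_of_δGRA {p r : XG × XR × XA} {e : Ev S}
    (h : δGRA So Sa δG δR δA p e = some r) :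
    run δG p.1 (PGproj [e]) = some r.1 := by
  cases e with
  | plain a =>
    by_cases ha : a ∈ So
    · simp [PGproj, run, ((δGRA_plain_eq_some_iff_of_mem ha p r).mp h).1]
    · simp [PGproj, run, ((δGRA_plain_eq_some_iff_of_not_mem ha p r).mp h).1]
  | ins a => simp [PGproj, run, ((δGRA_ins_eq_some_iff p r).mp h).2.1]
  | del a => simp [PGproj, run, ((δGRA_del_eq_some_iff p r).mp h).2.1]

/-- Enabled unobservable events self-loop, so the supervisor moves only on what it observes. -/
theorem eq_ΔRrun_of_δGRA (hR : IsSupRealization So Suc δR) {p r : XG × XR × XA} {e : Ev S}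
    (h : δGRA So Sa δG δR δA p e = some r) :
    r.2.1 = ΔRrun δR p.2.1 (PSproj (projOe So [e])) := by
  cases e with
  | plain a =>
    by_cases ha : a ∈ So
    · simp [projOe, PSproj, ΔRrun, ha, ((δGRA_plain_eq_some_iff_of_mem ha p r).mp h).2.1]
    · have hy := ((δGRA_plain_eq_some_iff_of_not_mem ha p r).mp h).2.1
      have hloop := hR.2 p.2.1 a ha (by simp [hy])
      simp_all [projOe, PSproj, ΔRrun]
  | ins a => simp [projOe, PSproj, ΔRrun, ((δGRA_ins_eq_some_iff p r).mp h).2.2.1]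
  | del a => simp [projOe, PSproj, ΔRrun, ((δGRA_del_eq_some_iff p r).mp h).2.2.2.1]

theorem run_PGproj_of_run_δGRA {p : XG × XR × XA} {t : List (Ev S)} :
    ∀ {r}, run (δGRA So Sa δG δR δA) p t = some r → run δG p.1 (PGproj t) = some r.1 := by
  induction t using List.reverseRecOn with
  | nil => intro r h; cases h; rfl
  | append_singleton t e ih =>
    intro r h
    obtain ⟨r0, h0, he⟩ := run_snoc_eq_some.mp h
    rw [PGproj_append, run_append, ih h0]
    exact run_PGproj_of_δGRA he

theorem eq_ΔRrun_of_run_δGRA (hR : IsSupRealization So Suc δR) {p : XG × XR × XA}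
    {t : List (Ev S)} :
    ∀ {r}, run (δGRA So Sa δG δR δA) p t = some r →
      r.2.1 = ΔRrun δR p.2.1 (PSproj (projOe So t)) := by
  induction t using List.reverseRecOn with
  | nil => intro r h; cases h; rfl
  | append_singleton t e ih =>
    intro r h
    obtain ⟨r0, h0, he⟩ := run_snoc_eq_some.mp h
    rw [projOe_append, PSproj_append, ΔRrun_append, ← ih h0]
    exact eq_ΔRrun_of_δGRA hR he

theorem run_δGRA_map_plain (hR : IsSupRealization So Suc δR) {w : List S} {y : XR}
    (hw : ∀ a ∈ w, a ∉ So ∧ a ∈ ΓR δR y) {x x' : XG} (z : XA) (h : run δG x w = some x') :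
    run (δGRA So Sa δG δR δA) (x, y, z) (w.map .plain) = some (x', y, z) := by
  induction w generalizing x with
  | nil => cases h; rfl
  | cons a w ih =>
    obtain ⟨x1, hx1, h⟩ := Option.bind_eq_some_iff.mp h
    obtain ⟨ha, hay⟩ := hw a (by simp)
    have hstep : δGRA So Sa δG δR δA (x, y, z) (.plain a) = some (x1, y, z) :=
      (δGRA_plain_eq_some_iff_of_not_mem ha _ _).mpr ⟨hx1, hR.2 y a ha hay, rfl⟩
    simp only [List.map_cons, run, hstep, Option.bind_some]
    exact ih (fun b hb => hw b (by simp [hb])) h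

theorem projOe_map_plain {w : List S} (hw : ∀ a ∈ w, a ∉ So) :
    projOe So (w.map .plain) = [] := by
  simp_all [projOe]

end ClosedLoop

section Arena

variable {So Suc Sa : Set S} {δG : XG → S → Option XG} {δA : XA → Ev S → Option XA}

theorem subset_ΓR {δR : XR → S → Option XR} (hR : IsSupRealization So Suc δR) (y : XR) :
    Suc ⊆ ΓR δR y :=
  fun e he => hR.1 y e he

theorem mem_URch_self {γ : Set S} {Q : Set XG} : Q ⊆ URch So δG γ Q :=
  fun x hx => ⟨[], by simp, x, hx, rfl⟩

theorem URch_URch_subset {γ : Set S} {Q : Set XG} :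
    URch So δG γ (URch So δG γ Q) ⊆ URch So δG γ Q := by
  rintro x ⟨w₂, hw₂, x₁, ⟨w₁, hw₁, x₀, hx₀, h₁⟩, h₂⟩
  refine ⟨w₁ ++ w₂, fun a ha => ?_, x₀, hx₀, by simp [run_append, h₁, h₂]⟩
  rcases List.mem_append.mp ha with ha | ha
  exacts [hw₁ a ha, hw₂ a ha]

theorem subset_of_δAr_inl {st st' : AQ1 XG XA ⊕ AQ2 S XG XA} {γ : Set S}
    (h : δAr So Suc Sa δG δA st (.inl γ) = some st') : Suc ⊆ γ := by
  rcases st with p | q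
  · by_contra hγ
    simp [δAr, hγ] at h
  · simp [δAr] at h

theorem h2_plain_eq_some {q : AQ2 S XG XA} {a : S} {st : AQ1 XG XA ⊕ AQ2 S XG XA}
    (h : h2 So Sa δG δA q (.plain a) = some st) :
    a ∈ So ∧ ((q.2.2.2 = some a ∧ st = .inl (q.1, q.2.1)) ∨
      (q.2.2.2 = none ∧ a ∈ ΓGset δG q.1 ∧ a ∈ q.2.2.1 ∧
        ∃ z, δA q.2.1 (.plain a) = some z ∧ st = .inl (NXr δG a q.1, z))) := by
  by_cases ha : a ∈ So
  · by_cases hσ : q.2.2.2 = some a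
    · simp_all [h2]
    · by_cases hc : q.2.2.2 = none ∧ a ∈ ΓGset δG q.1 ∧ a ∈ q.2.2.1
      · simp only [h2, if_pos ha, if_neg hσ, if_pos hc, Option.map_eq_some_iff] at h
        obtain ⟨z, hz, rfl⟩ := h
        exact ⟨ha, .inr ⟨hc.1, hc.2.1, hc.2.2, z, hz, rfl⟩⟩
      · simp [h2, ha, hσ, hc] at h
  · simp [h2, ha] at h

theorem h2_ins_eq_some {q : AQ2 S XG XA} {a : S} {st : AQ1 XG XA ⊕ AQ2 S XG XA}
    (h : h2 So Sa δG δA q (.ins a) = some st) :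
    a ∈ Sa ∧ q.2.2.2 = none ∧
      ∃ z, δA q.2.1 (.ins a) = some z ∧ st = .inr (q.1, z, q.2.2.1, some a) := by
  by_cases hc : a ∈ Sa ∧ q.2.2.2 = none
  · simp only [h2, if_pos hc, Option.map_eq_some_iff] at h
    obtain ⟨z, hz, rfl⟩ := h
    exact ⟨hc.1, hc.2, z, hz, rfl⟩
  · simp [h2, hc] at h

theorem h2_del_eq_some {q : AQ2 S XG XA} {a : S} {st : AQ1 XG XA ⊕ AQ2 S XG XA}
    (h : h2 So Sa δG δA q (.del a) = some st) :
    a ∈ Sa ∧ q.2.2.2 = none ∧ a ∈ ΓGset δG q.1 ∧ a ∈ q.2.2.1 ∧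
      ∃ z, δA q.2.1 (.del a) = some z ∧
        st = .inr (URch So δG q.2.2.1 (NXr δG a q.1), z, q.2.2.1, none) := by
  by_cases hc : a ∈ Sa ∧ q.2.2.2 = none ∧ a ∈ ΓGset δG q.1 ∧ a ∈ q.2.2.1
  · simp only [h2, if_pos hc, Option.map_eq_some_iff] at h
    obtain ⟨z, hz, rfl⟩ := h
    exact ⟨hc.1, hc.2.1, hc.2.2.1, hc.2.2.2, z, hz, rfl⟩
  · simp [h2, hc] at h

theorem inOe_of_h2_eq_some {q : AQ2 S XG XA} {e : Ev S} {st : AQ1 XG XA ⊕ AQ2 S XG XA}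
    (h : h2 So Sa δG δA q e = some st) : inOe So Sa e := by
  cases e with
  | plain a => exact (h2_plain_eq_some h).1
  | ins a => exact (h2_ins_eq_some h).1
  | del a => exact (h2_del_eq_some h).1

theorem inOe_of_mem_LA_snoc {x0G : XG} {x0A : XA} {u : List (Set S ⊕ Ev S)} {e : Ev S}
    (h : u ++ [.inr e] ∈ LA So Suc Sa δG δA x0G x0A) : inOe So Sa e := by
  obtain ⟨st', hst'⟩ := Option.isSome_iff_exists.mp h
  obtain ⟨st, -, hstep⟩ := run_snoc_eq_some.mp hst'
  rcases st with p | q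
  · simp [δAr] at hstep
  · exact inOe_of_h2_eq_some hstep

end Arena

section Supervised

variable {So Suc Sa : Set S} {δG : XG → S → Option XG} {x0G : XG}
  {δR : XR → S → Option XR} {x0R : XR} {δA : XA → Ev S → Option XA} {x0A : XA}

theorem LRmem.mem_LA (hR : IsSupRealization So Suc δR) {u : List (Set S ⊕ Ev S)}
    (hu : LRmem So Suc Sa δG x0G δA x0A δR x0R u) : u ∈ LA So Suc Sa δG δA x0G x0A := by
  induction hu with
  | nil => rfl
  | p2 _ _ _ _ _ _ hsome => exact hsome
  | p1uc s p _ hrun => simp [LA, Lang, run_append, hrun, run, δAr]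
  | p1R s p _ hrun =>
    simp [LA, Lang, run_append, hrun, run, δAr, show Suc ⊆ CR δR x0R _ from subset_ΓR hR _]

theorem LRmem.snoc_iff (hR : IsSupRealization So Suc δR) {u : List (Set S ⊕ Ev S)}
    {c : Set S ⊕ Ev S} :
    LRmem So Suc Sa δG x0G δA x0A δR x0R (u ++ [c]) ↔
      LRmem So Suc Sa δG x0G δA x0A δR x0R u ∧ u ++ [c] ∈ LA So Suc Sa δG δA x0G x0A ∧
        ∀ γ, c = .inl γ → γ = Suc ∨ γ = CR δR x0R (ηproj So u) := by
  constructor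
  · intro h
    suffices LRmem So Suc Sa δG x0G δA x0A δR x0R u ∧
        ∀ γ, c = .inl γ → γ = Suc ∨ γ = CR δR x0R (ηproj So u) from
      ⟨this.1, h.mem_LA hR, this.2⟩
    generalize hw : u ++ [c] = w at h
    cases h with
    | nil => simp at hw
    | p2 s _ _ hs =>
      obtain ⟨rfl, hc⟩ := List.append_inj' hw rfl
      obtain rfl := List.singleton_inj.mp hc
      exact ⟨hs, fun γ h => nomatch h⟩
    | p1uc s _ hs =>
      obtain ⟨rfl, hc⟩ := List.append_inj' hw rfl
      obtain rfl := List.singleton_inj.mp hc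
      exact ⟨hs, fun γ h => .inl (Sum.inl.inj h).symm⟩
    | p1R s _ hs =>
      obtain ⟨rfl, hc⟩ := List.append_inj' hw rfl
      obtain rfl := List.singleton_inj.mp hc
      exact ⟨hs, fun γ h => .inr (Sum.inl.inj h).symm⟩
  · rintro ⟨hu, hLA, hdec⟩
    obtain ⟨st', hst'⟩ := Option.isSome_iff_exists.mp hLA
    obtain ⟨st, hst, hstep⟩ := run_snoc_eq_some.mp hst'
    rcases c with γ | e <;> rcases st with p | q
    · rcases hdec γ rfl with rfl | rfl
      exacts [.p1uc u p hu hst, .p1R u p hu hst]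
    · simp [δAr] at hstep
    · simp [δAr] at hstep
    · exact .p2 u q e hu hst (inOe_of_h2_eq_some hstep) hLA

theorem LRmem.of_prefix (hR : IsSupRealization So Suc δR) {u v : List (Set S ⊕ Ev S)}
    (hu : LRmem So Suc Sa δG x0G δA x0A δR x0R u) (hvu : v <+: u) :
    LRmem So Suc Sa δG x0G δA x0A δR x0R v := by
  induction u using List.reverseRecOn with
  | nil => rwa [List.prefix_nil.mp hvu]
  | append_singleton u c ih =>
    rcases List.prefix_concat_iff.mp hvu with rfl | hvu
    exacts [hu, ih ((LRmem.snoc_iff hR).mp hu).1 hvu]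

theorem LRmem_controllable (hR : IsSupRealization So Suc δR) :
    ControllableLang (LA So Suc Sa δG δA x0G x0A) (Ec Suc)ᶜ
      {u | LRmem So Suc Sa δG x0G δA x0A δR x0R u} := by
  intro s hs c hc hsc
  refine (LRmem.snoc_iff hR).mpr ⟨hs, hsc, ?_⟩
  rintro γ rfl
  obtain ⟨st', hst'⟩ := Option.isSome_iff_exists.mp hsc
  obtain ⟨st, -, hstep⟩ := run_snoc_eq_some.mp hst'
  by_contra hne
  exact hc ⟨γ, rfl, subset_of_δAr_inl hstep, fun h => hne (.inl h)⟩

theorem LRmem_of_projEo_prefix (hR : IsSupRealization So Suc δR) {s t : List (Set S ⊕ Ev S)}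
    (hs : s ∈ LA So Suc Sa δG δA x0G x0A) (ht : LRmem So Suc Sa δG x0G δA x0A δR x0R t)
    (hst : projEo s <+: projEo t) : LRmem So Suc Sa δG x0G δA x0A δR x0R s := by
  induction s using List.reverseRecOn with
  | nil => exact .nil
  | append_singleton s c ih =>
    have hs' := mem_Lang_of_prefix hs (List.prefix_append s [c])
    have hsc : projEo s <+: projEo (s ++ [c]) := by simp
    refine (LRmem.snoc_iff hR).mpr ⟨ih hs' (hsc.trans hst), hs, ?_⟩
    rintro γ rfl
    have hst' : projEo s ++ [.inl γ] <+: projEo t := by simpa [projEo] using hst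
    obtain ⟨t₁, ht₁, hproj⟩ := exists_prefix_of_prefix_flatMap
      (by rintro (γ | (a | a | a)) <;> simp) hst'
    have hdec := ((LRmem.snoc_iff hR).mp (ht.of_prefix hR ht₁)).2.2 γ rfl
    rwa [← ηproj_projEo So t₁, show projEo t₁ = projEo s from hproj, ηproj_projEo] at hdec

theorem LRmem_normal (hR : IsSupRealization So Suc δR) :
    NormalLang projEo (LA So Suc Sa δG δA x0G x0A)
      {u | LRmem So Suc Sa δG x0G δA x0A δR x0R u} := by
  ext s
  exact ⟨fun hs => ⟨hs.mem_LA hR, s, hs, rfl⟩,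
    fun ⟨hs, t, ht, hts⟩ => LRmem_of_projEo_prefix hR hs ht (hts ▸ List.prefix_refl _)⟩

end Supervised

def Witnessed (So Sa : Set S) (δG : XG → S → Option XG) (x0G : XG)
    (δR : XR → S → Option XR) (x0R : XR) (δA : XA → Ev S → Option XA) (x0A : XA)
    (S1 : Set XG) (z : XA) (v : List S) : Prop :=
  ∀ x ∈ S1, ∃ t y, run (δGRA So Sa δG δR δA) (x0G, x0R, x0A) t = some (x, y, z) ∧
    PSproj (projOe So t) = v

/-- The invariant kept along `L_R`: when an insertion `σ = a` is pending, the supervisor has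
already observed `a`. -/
def EstimateSound (So Sa : Set S) (δG : XG → S → Option XG) (x0G : XG)
    (δR : XR → S → Option XR) (x0R : XR) (δA : XA → Ev S → Option XA) (x0A : XA)
    (u : List (Set S ⊕ Ev S)) : AQ1 XG XA ⊕ AQ2 S XG XA → Prop
  | .inl (S1, z) => Witnessed So Sa δG x0G δR x0R δA x0A S1 z (ηproj So u)
  | .inr (S1, z, γ, none) =>
      Witnessed So Sa δG x0G δR x0R δA x0A S1 z (ηproj So u) ∧ γ ⊆ CR δR x0R (ηproj So u)
  | .inr (S1, z, _, some a) => Witnessed So Sa δG x0G δR x0R δA x0A S1 z (ηproj So u ++ [a])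

section Soundness

variable {So Suc Sa : Set S} {δG : XG → S → Option XG} {x0G : XG}
  {δR : XR → S → Option XR} {x0R : XR} {δA : XA → Ev S → Option XA} {x0A : XA}

theorem Witnessed.step (hR : IsSupRealization So Suc δR) {S1 S1' : Set XG} {z z' : XA}
    {v : List S} {e : Ev S} (hW : Witnessed So Sa δG x0G δR x0R δA x0A S1 z v)
    (hstep : ∀ x' ∈ S1', ∃ x ∈ S1, ∃ y',
      δGRA So Sa δG δR δA (x, ΔRrun δR x0R v, z) e = some (x', y', z')) :
    Witnessed So Sa δG x0G δR x0R δA x0A S1' z' (v ++ PSproj (projOe So [e])) := by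
  intro x' hx'
  obtain ⟨x, hx, y', hy'⟩ := hstep x' hx'
  obtain ⟨t, y, ht, rfl⟩ := hW x hx
  rw [← eq_ΔRrun_of_run_δGRA hR ht] at hy'
  exact ⟨t ++ [e], y', run_snoc_eq_some.mpr ⟨_, ht, hy'⟩, by simp⟩

theorem Witnessed.URch (hR : IsSupRealization So Suc δR) {S1 : Set XG} {z : XA} {v : List S}
    {γ : Set S} (hW : Witnessed So Sa δG x0G δR x0R δA x0A S1 z v) (hγ : γ ⊆ CR δR x0R v) :
    Witnessed So Sa δG x0G δR x0R δA x0A (URch So δG γ S1) z v := by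
  rintro x' ⟨w, hw, x, hx, hrun⟩
  obtain ⟨t, y, ht, rfl⟩ := hW x hx
  have hy : y = ΔRrun δR x0R (PSproj (projOe So t)) := eq_ΔRrun_of_run_δGRA hR ht
  refine ⟨t ++ w.map .plain, y, ?_, by simp [projOe_map_plain fun a ha => (hw a ha).1]⟩
  rw [run_append, ht, Option.bind_some]
  exact run_δGRA_map_plain hR (fun a ha => ⟨(hw a ha).1, hy ▸ hγ (hw a ha).2⟩) z hrun

theorem EstimateSound.exists_run {u : List (Set S ⊕ Ev S)} {st : AQ1 XG XA ⊕ AQ2 S XG XA}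
    (h : EstimateSound So Sa δG x0G δR x0R δA x0A u st) {x : XG} (hx : x ∈ I1 st) :
    ∃ t y z, run (δGRA So Sa δG δR δA) (x0G, x0R, x0A) t = some (x, y, z) := by
  have hW : ∃ z v, Witnessed So Sa δG x0G δR x0R δA x0A (I1 st) z v := by
    rcases st with ⟨S1, z⟩ | ⟨S1, z, γ, _ | a⟩
    exacts [⟨z, _, h⟩, ⟨z, _, h.1⟩, ⟨z, _, h⟩]
  obtain ⟨z, v, hW⟩ := hW
  obtain ⟨t, y, ht, -⟩ := hW x hx
  exact ⟨t, y, z, ht⟩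

theorem EstimateSound.h1 (hR : IsSupRealization So Suc δR) {u : List (Set S ⊕ Ev S)}
    {p : AQ1 XG XA} {γ : Set S} (h : EstimateSound So Sa δG x0G δR x0R δA x0A u (.inl p))
    (hγ : γ ⊆ CR δR x0R (ηproj So u)) :
    EstimateSound So Sa δG x0G δR x0R δA x0A (u ++ [.inl γ]) (.inr (h1 So δG p γ)) := by
  obtain ⟨S1, z⟩ := p
  have hη : ηproj So (u ++ [.inl γ]) = ηproj So u := by simp [ηproj]
  simp only [EstimateSound, RobustDES.h1, hη]
  exact ⟨Witnessed.URch hR h hγ, hγ⟩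

theorem EstimateSound.h2 (hR : IsSupRealization So Suc δR) {u : List (Set S ⊕ Ev S)}
    {q : AQ2 S XG XA} {e : Ev S} {st : AQ1 XG XA ⊕ AQ2 S XG XA}
    (h : EstimateSound So Sa δG x0G δR x0R δA x0A u (.inr q))
    (hstep : h2 So Sa δG δA q e = some st) :
    EstimateSound So Sa δG x0G δR x0R δA x0A (u ++ [.inr e]) st := by
  obtain ⟨S1, z, γ, σ⟩ := q
  cases e with
  | plain a =>
    have hη :
        ηproj So (u ++ [.inr (.plain a)]) = ηproj So u ++ PSproj (projOe So [.plain a]) := by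
      simp [ηproj, projOe, PSproj, (h2_plain_eq_some hstep).1]
    obtain ⟨ha, ⟨rfl, rfl⟩ | ⟨rfl, -, hγ, z', hz, rfl⟩⟩ := h2_plain_eq_some hstep
    · simpa [EstimateSound, hη, projOe, PSproj, ha] using h
    · rw [EstimateSound, hη]
      refine h.1.step hR fun x' ⟨x, hx, hδ⟩ => ?_
      obtain ⟨y', hy'⟩ := Option.isSome_iff_exists.mp (h.2 hγ)
      exact ⟨x, hx, y', (δGRA_plain_eq_some_iff_of_mem ha _ _).mpr ⟨hδ, hy', hz⟩⟩
  | ins a =>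
    obtain ⟨ha, rfl, z', hz, rfl⟩ := h2_ins_eq_some hstep
    have hη : ηproj So (u ++ [.inr (.ins a)]) ++ [a] =
        ηproj So u ++ PSproj (projOe So [.ins a]) := by
      simp [ηproj, projOe, PSproj]
    rw [EstimateSound, hη]
    exact h.1.step hR fun x hx =>
      ⟨x, hx, _, (δGRA_ins_eq_some_iff _ _).mpr ⟨ha, rfl, rfl, hz⟩⟩
  | del a =>
    obtain ⟨ha, rfl, -, hγ, z', hz, rfl⟩ := h2_del_eq_some hstep
    have hη : ηproj So (u ++ [.inr (.del a)]) = ηproj So u := by simp [ηproj]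
    have hW : Witnessed So Sa δG x0G δR x0R δA x0A (NXr δG a S1) z'
        (ηproj So u ++ PSproj (projOe So [.del a])) :=
      h.1.step hR fun x' ⟨x, hx, hδ⟩ =>
        ⟨x, hx, _, (δGRA_del_eq_some_iff _ _).mpr ⟨ha, hδ, h.2 hγ, rfl, hz⟩⟩
    simp only [projOe, PSproj, List.flatMap_cons, List.flatMap_nil, List.append_nil] at hW
    simp only [EstimateSound, hη]
    exact ⟨hW.URch hR h.2, h.2⟩

theorem LRmem.estimateSound (hR : IsSupRealization So Suc δR) {u : List (Set S ⊕ Ev S)}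
    (hu : LRmem So Suc Sa δG x0G δA x0A δR x0R u) {st : AQ1 XG XA ⊕ AQ2 S XG XA}
    (hst : run (δAr So Suc Sa δG δA) (.inl (arenaInit x0G x0A)) u = some st) :
    EstimateSound So Sa δG x0G δR x0R δA x0A u st := by
  induction hu generalizing st with
  | nil =>
    cases hst
    rintro x rfl
    exact ⟨[], x0R, rfl, rfl⟩
  | p2 s q e _ hrun _ _ ih =>
    obtain ⟨st₀, h₀, hstep⟩ := run_snoc_eq_some.mp hst
    rw [hrun, Option.some_inj] at h₀
    subst h₀
    exact (ih hrun).h2 hR hstep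
  | p1uc s p _ hrun ih =>
    obtain ⟨st₀, h₀, hstep⟩ := run_snoc_eq_some.mp hst
    rw [hrun, Option.some_inj] at h₀
    subst h₀
    simp only [δAr, subset_refl, if_true, Option.some_inj] at hstep
    exact hstep ▸ (ih hrun).h1 hR (subset_ΓR hR _)
  | p1R s p _ hrun ih =>
    obtain ⟨st₀, h₀, hstep⟩ := run_snoc_eq_some.mp hst
    rw [hrun, Option.some_inj] at h₀
    subst h₀
    simp only [δAr, show Suc ⊆ CR δR x0R _ from subset_ΓR hR _, if_true,
      Option.some_inj] at hstep
    exact hstep ▸ (ih hrun).h1 hR subset_rfl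

theorem LRmem_subset_LAtrim (hR : IsSupRealization So Suc δR) {Xcrit : Set XG}
    (hrob : Robust So Sa Xcrit δG x0G δR x0R δA x0A) :
    {u | LRmem So Suc Sa δG x0G δA x0A δR x0R u} ⊆ LAtrim So Suc Sa δG δA x0G x0A Xcrit := by
  intro u hu
  refine ⟨LRmem.mem_LA hR hu, fun v hvu st hst => ?_⟩
  refine Set.eq_empty_iff_forall_notMem.mpr fun x ⟨hx, hxc⟩ => ?_
  obtain ⟨t, y, z, ht⟩ := ((LRmem.of_prefix hR hu hvu).estimateSound hR hst).exists_run hx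
  exact hrob t (by simp [Lang, ht]) x (run_PGproj_of_run_δGRA ht) hxc

end Soundness

def runWordStep (e : Ev S) (γ : Set S) : List (Set S ⊕ Ev S) :=
  match e with
  | .plain a => [.inr (.plain a), .inl γ]
  | .del a => [.inr (.del a)]
  | .ins a => [.inr (.ins a), .inr (.plain a), .inl γ]

section RunWords

variable {So Suc Sa : Set S} {δG : XG → S → Option XG} {x0G : XG}
  {δR : XR → S → Option XR} {x0R : XR} {δA : XA → Ev S → Option XA} {x0A : XA}

theorem ctrlSeq_snoc (δR : XR → S → Option XR) (x0R : XR) (s : List (Ev S)) (e : Ev S) :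
    ctrlSeq δR x0R (s ++ [e]) = ctrlSeq δR x0R s ++ [CR δR x0R (PSproj (s ++ [e]))] := by
  simp only [ctrlSeq, List.length_append, List.length_singleton, List.range_succ,
    List.map_append, List.map_cons, List.map_nil]
  congr 1
  · refine List.map_congr_left fun i hi => ?_
    rw [List.take_append_of_le_length (by rw [List.mem_range] at hi; omega)]
  · rw [List.take_of_length_le (by simp)]

theorem Wword_ctrlSeq_snoc (δR : XR → S → Option XR) (x0R : XR) (γ₀ : Set S)
    (s : List (Ev S)) (e : Ev S) :
    Wword γ₀ (s ++ [e]) (ctrlSeq δR x0R (s ++ [e])) =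
      Wword γ₀ s (ctrlSeq δR x0R s) ++ runWordStep e (CR δR x0R (PSproj (s ++ [e]))) := by
  have hlen : s.length = (ctrlSeq δR x0R s).length := by simp [ctrlSeq]
  rw [ctrlSeq_snoc]
  cases e <;> simp [Wword, runWordStep, List.zip_append hlen]

theorem ηproj_runWordStep (hSa : Sa ⊆ So) {e : Ev S} (he : inOe So Sa e) (γ : Set S) :
    ηproj So (runWordStep e γ) = PSproj [e] := by
  cases e with
  | plain a => simp [runWordStep, ηproj, PSproj, show a ∈ So from he]
  | ins a => simp [runWordStep, ηproj, PSproj, hSa he]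
  | del a => simp [runWordStep, ηproj, PSproj]

theorem run_δAr_runWordStep {γ : Set S} (hγ : Suc ⊆ γ) (q : AQ2 S XG XA) (e : Ev S) :
    run (δAr So Suc Sa δG δA) (.inr q) (runWordStep e γ) =
      (H2 So Sa δG δA q e γ).map .inr := by
  cases e with
  | plain a =>
    rcases h : h2 So Sa δG δA q (.plain a) with _ | _ | _ <;>
      simp [runWordStep, run, δAr, H2, h, hγ]
  | ins a =>
    rcases h : h2 So Sa δG δA q (.ins a) with _ | _ | q'
    · simp [runWordStep, run, δAr, H2, h]
    · simp [runWordStep, run, δAr, H2, h]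
    · rcases h' : h2 So Sa δG δA q' (.plain a) with _ | _ | _ <;>
        simp [runWordStep, run, δAr, H2, h, h', hγ]
  | del a =>
    rcases h : h2 So Sa δG δA q (.del a) with _ | _ | _
    · simp [runWordStep, run, δAr, H2, h]
    · obtain ⟨-, -, -, -, _, -, h⟩ := h2_del_eq_some h
      simp at h
    · simp [runWordStep, run, δAr, H2, h]

theorem LRmem.append_runWordStep (hSa : Sa ⊆ So) (hR : IsSupRealization So Suc δR)
    {u : List (Set S ⊕ Ev S)} {e : Ev S} (hu : LRmem So Suc Sa δG x0G δA x0A δR x0R u)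
    (he : inOe So Sa e)
    (h : u ++ runWordStep e (CR δR x0R (ηproj So u ++ PSproj [e])) ∈
      LA So Suc Sa δG δA x0G x0A) :
    LRmem So Suc Sa δG x0G δA x0A δR x0R
      (u ++ runWordStep e (CR δR x0R (ηproj So u ++ PSproj [e]))) := by
  cases e with
  | plain a =>
    have h₁ := (LRmem.snoc_iff hR).mpr ⟨hu, (mem_Lang_of_prefix h (by simp [runWordStep]) :
      u ++ [.inr (.plain a)] ∈ _), by simp⟩
    have h₂ := (LRmem.snoc_iff hR).mpr ⟨h₁, by simpa [runWordStep] using h, fun γ hγ =>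
      .inr (by cases hγ; simp [ηproj, PSproj, show a ∈ So from he])⟩
    simpa [runWordStep] using h₂
  | ins a =>
    have h₁ := (LRmem.snoc_iff hR).mpr ⟨hu, (mem_Lang_of_prefix h (by simp [runWordStep]) :
      u ++ [.inr (.ins a)] ∈ _), by simp⟩
    have h₂ := (LRmem.snoc_iff hR).mpr ⟨h₁, (mem_Lang_of_prefix h (by simp [runWordStep]) :
      u ++ [.inr (.ins a)] ++ [.inr (.plain a)] ∈ _), by simp⟩
    have h₃ := (LRmem.snoc_iff hR).mpr ⟨h₂, by simpa [runWordStep] using h, fun γ hγ =>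
      .inr (by cases hγ; simp [ηproj, PSproj, hSa he])⟩
    simpa [runWordStep] using h₃
  | del a => exact (LRmem.snoc_iff hR).mpr ⟨hu, h, by simp⟩

theorem LRmem_Wword_and_ηproj_Wword (hSa : Sa ⊆ So) (hR : IsSupRealization So Suc δR)
    {s : List (Ev S)}
    (hs : Wword (CR δR x0R []) s (ctrlSeq δR x0R s) ∈ LA So Suc Sa δG δA x0G x0A) :
    LRmem So Suc Sa δG x0G δA x0A δR x0R (Wword (CR δR x0R []) s (ctrlSeq δR x0R s)) ∧
      ηproj So (Wword (CR δR x0R []) s (ctrlSeq δR x0R s)) = PSproj s := by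
  induction s using List.reverseRecOn with
  | nil => exact ⟨.p1R [] _ .nil rfl, rfl⟩
  | append_singleton s e ih =>
    rw [Wword_ctrlSeq_snoc] at hs ⊢
    obtain ⟨hu, hη⟩ := ih (mem_Lang_of_prefix hs (List.prefix_append _ _))
    have he : inOe So Sa e := inOe_of_mem_LA_snoc
      (u := Wword (CR δR x0R []) s (ctrlSeq δR x0R s))
      (mem_Lang_of_prefix hs (by cases e <;> simp [runWordStep]))
    rw [PSproj_append, ← hη] at hs ⊢
    exact ⟨hu.append_runWordStep hSa hR he hs, by simp [ηproj_runWordStep hSa he]⟩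

end RunWords

section Forward

variable {So Suc Sa : Set S} {δG : XG → S → Option XG} {x0G : XG}
  {δR : XR → S → Option XR} {x0R : XR} {δA : XA → Ev S → Option XA} {x0A : XA}

theorem exists_H2_of_δGRA (hSa : Sa ⊆ So) {S1 : Set XG} {x : XG} {y : XR} {z : XA} {e : Ev S}
    {r : XG × XR × XA} (he : inOe So Sa e) (hstep : δGRA So Sa δG δR δA (x, y, z) e = some r)
    (hx : x ∈ S1) :
    ∃ S1', H2 So Sa δG δA (S1, z, ΓR δR y, none) e (ΓR δR r.2.1) =
        some (S1', r.2.2, ΓR δR r.2.1, none) ∧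
      r.1 ∈ S1' ∧ URch So δG (ΓR δR r.2.1) S1' ⊆ S1' := by
  obtain ⟨x', y', z'⟩ := r
  cases e with
  | plain a =>
    have ha : a ∈ So := he
    obtain ⟨hG, hy, hz⟩ := (δGRA_plain_eq_some_iff_of_mem ha _ _).mp hstep
    have hΓ : a ∈ ΓGset δG S1 := ⟨x, hx, by simp [hG]⟩
    have hγ : a ∈ ΓR δR y := by simp [ΓR, hy]
    refine ⟨URch So δG (ΓR δR y') (NXr δG a S1), ?_, mem_URch_self ⟨x, hx, hG⟩,
      URch_URch_subset⟩
    simp [H2, h2, ha, hΓ, hγ, hz, h1]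
  | ins a =>
    obtain ⟨ha, rfl, -, hz⟩ := (δGRA_ins_eq_some_iff _ _).mp hstep
    refine ⟨URch So δG (ΓR δR y') S1, ?_, mem_URch_self hx, URch_URch_subset⟩
    simp [H2, h2, ha, hSa ha, hz, h1]
  | del a =>
    obtain ⟨ha, hG, hγ, rfl, hz⟩ := (δGRA_del_eq_some_iff _ _).mp hstep
    have hΓ : a ∈ ΓGset δG S1 := ⟨x, hx, by simp [hG]⟩
    refine ⟨URch So δG (ΓR δR y') (NXr δG a S1), ?_, mem_URch_self ⟨x, hx, hG⟩,
      URch_URch_subset⟩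
    simp [H2, h2, ha, hΓ, show a ∈ ΓR δR y' from hγ, hz]

theorem exists_run_δAr_Wword (hSa : Sa ⊆ So) (hR : IsSupRealization So Suc δR) {t : List (Ev S)}
    {r : XG × XR × XA} (h : run (δGRA So Sa δG δR δA) (x0G, x0R, x0A) t = some r) :
    ∃ S1, run (δAr So Suc Sa δG δA) (.inl (arenaInit x0G x0A))
        (Wword (CR δR x0R []) (projOe So t) (ctrlSeq δR x0R (projOe So t))) =
          some (.inr (S1, r.2.2, ΓR δR r.2.1, none)) ∧
      r.1 ∈ S1 ∧ URch So δG (ΓR δR r.2.1) S1 ⊆ S1 := by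
  induction t using List.reverseRecOn generalizing r with
  | nil =>
    cases h
    refine ⟨URch So δG (ΓR δR x0R) {x0G}, ?_, mem_URch_self (Set.mem_singleton x0G),
      URch_URch_subset⟩
    simp [Wword, ctrlSeq, projOe, run, δAr, show Suc ⊆ CR δR x0R [] from subset_ΓR hR _, h1,
      arenaInit]
    exact ⟨rfl, rfl⟩
  | append_singleton t e ih =>
    obtain ⟨r₀, h₀, he⟩ := run_snoc_eq_some.mp h
    obtain ⟨S1, hrun, hx, hS1⟩ := ih h₀
    by_cases hobs : inOe So Sa e
    · obtain ⟨S1', hH2, hx', hS1'⟩ := exists_H2_of_δGRA hSa hobs he hx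
      have hγ : CR δR x0R (PSproj (projOe So t ++ [e])) = ΓR δR r.2.1 := by
        rw [eq_ΔRrun_of_run_δGRA hR h, projOe_append, projOe_singleton_of_inOe hobs]
        rfl
      refine ⟨S1', ?_, hx', hS1'⟩
      rw [projOe_append, projOe_singleton_of_inOe hobs, Wword_ctrlSeq_snoc, hγ, run_append, hrun,
        Option.bind_some, run_δAr_runWordStep (subset_ΓR hR _), hH2]
      rfl
    · obtain ⟨a, ha, rfl⟩ := exists_not_mem_of_δGRA_of_not_inOe he hobs
      obtain ⟨hG, hy, hz⟩ := (δGRA_plain_eq_some_iff_of_not_mem ha _ _).mp he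
      have hloop : r.2.1 = r₀.2.1 := by
        simpa [projOe, ha, PSproj, ΔRrun] using eq_ΔRrun_of_δGRA hR he
      have hproj : projOe So (t ++ [.plain a]) = projOe So t := by simp [projOe, ha]
      rw [hproj, hz, hloop]
      exact ⟨S1, hrun, hS1 ⟨[a], by simp [ha, ΓR, hy], r₀.1, hx, by simp [run, hG]⟩, hS1⟩

end Forward

theorem robust_iff_run_in_Lsup_general
    (So Suc Sa : Set S) (hSa : Sa ⊆ So) (Xcrit : Set XG)
    (δG : XG → S → Option XG) (x0G : XG)
    (δR : XR → S → Option XR) (x0R : XR) (hR : IsSupRealization So Suc δR)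
    (δA : XA → Ev S → Option XA) (x0A : XA) :
    Robust So Sa Xcrit δG x0G δR x0R δA x0A ↔
      ∀ s ∈ projOe So '' Lang (δGRA So Sa δG δR δA) (x0G, x0R, x0A),
        Wword (CR δR x0R []) s (ctrlSeq δR x0R s) ∈
          Lsup So Suc Sa δG δA x0G x0A Xcrit := by
  constructor
  · rintro hrob _ ⟨t, ht, rfl⟩
    obtain ⟨r, hr⟩ := Option.isSome_iff_exists.mp ht
    obtain ⟨S1, hrun, -⟩ := exists_run_δAr_Wword (Suc := Suc) (x0A := x0A) hSa hR hr
    exact ⟨_, ⟨LRmem_subset_LAtrim hR hrob, LRmem_controllable hR, LRmem_normal hR⟩,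
      (LRmem_Wword_and_ηproj_Wword hSa hR (by simp [LA, Lang, hrun])).1⟩
  · intro h t ht x hx hxc
    obtain ⟨r, hr⟩ := Option.isSome_iff_exists.mp ht
    obtain ⟨S1, hrun, hrS1, -⟩ := exists_run_δAr_Wword (Suc := Suc) (x0A := x0A) hSa hR hr
    obtain ⟨K, ⟨hK, -, -⟩, hWK⟩ := h _ ⟨t, ht, rfl⟩
    have hxr : x = r.1 := Option.some_inj.mp (hx.symm.trans (run_PGproj_of_run_δGRA hr))
    have hsafe := (hK hWK).2 _ List.prefix_rfl _ hrun
    exact hsafe.subset ⟨hxr ▸ hrS1, hxc⟩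

/-- Theorem 1: a supervisor `R` is robust w.r.t. `G`, `X_crit`
and `A` if and only if for every `s ∈ P_{Σ_mΣ_{o,e}}(L(G_a||R_a||A))`, the run
word `W(s; γ₀, γ₁, …, γ_{|s|})` belongs to `L(𝒜^{sup})`, where `γ₀ = C_R(ε)`
and `γ_i = C_R(P^S(s^i))`. -/
theorem robust_iff_run_in_Lsup
    [Finite S] [Finite XG] [Finite XR] [Finite XA]
    (So Suc Sa : Set S) (hSa : Sa ⊆ So) (Xcrit : Set XG)
    (δG : XG → S → Option XG) (x0G : XG)
    (δR : XR → S → Option XR) (x0R : XR) (hR : IsSupRealization So Suc δR)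
    (δA : XA → Ev S → Option XA) (x0A : XA) (hA : IsAttack So Sa δA) :
    Robust So Sa Xcrit δG x0G δR x0R δA x0A ↔
      ∀ s ∈ projOe So '' Lang (δGRA So Sa δG δR δA) (x0G, x0R, x0A),
        Wword (CR δR x0R []) s (ctrlSeq δR x0R s) ∈
          Lsup So Suc Sa δG δA x0G x0A Xcrit :=
  robust_iff_run_in_Lsup_general So Suc Sa hSa Xcrit δG x0G δR x0R hR δA x0A

end RobustDES
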